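/- Consider a divisible homogeneous good to be split between two agents with entitlements b_1 = 1/3 and b_2 = 2/3 and valuations v_1(x) = x and v_2(x) = √x on [0,1]. Then there is no weighted envy-free allocation: there is no pair (x_1, x_2) with x_1, x_2 ≥ 0 and x_1 + x_2 = 1 satisfying both v_1(x_1) ≥ (b_1/b_2) · v_1(x_2) and v_2(x_2) ≥ (b_2/b_1) · v_2(x_1). -/

import Mathlib

theorem stmt_7 :
    ¬ ∃ x1 x2 : ℝ, 0 ≤ x1 ∧ 0 ≤ x2 ∧ x1 + x2 = 1 ∧
      -- agent 1 does not envy agent 2 (in the weighted sense): v1(x1) ≥ (b1/b2)·v1(x2)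
      ((1 / 2) * x2 ≤ x1) ∧
      -- agent 2 does not envy agent 1 (in the weighted sense): v2(x2) ≥ (b2/b1)·v2(x1)
      (2 * Real.sqrt x1 ≤ Real.sqrt x2) := by
  rintro ⟨x1, x2, hx1, hx2, hsum, henvy1, henvy2⟩
  have hsquared : 4 * x1 ≤ x2 := by
    have := (Real.le_sqrt (by positivity) hx2).mp henvy2
    rw [mul_pow, Real.sq_sqrt hx1] at this
    linarith
  -- `4 x1 ≤ x2 ≤ 2 x1` forces `x1 = 0`, so `x2 = 1`, violating agent 1's condition.
  linarith
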